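/- Let ε_n be a positive sequence and M > 0, and let A_n = {f ∈ 𝔽 : H(f*, f) > M ε_n}. Then the numerator of the pseudo-posterior probability of A_n satisfies E[ ∫_{A_n} R_n(f)^{1/2} Π(df) ] ≤ Π(A_n) e^{−n M² ε_n² / 2} ≤ e^{−n M² ε_n² / 2}, where the expectation is under Y_1,…,Y_n i.i.d. with density f*; consequently, for any K < M²/2, P( ∫_{A_n} R_n(f)^{1/2} Π(df) ≤ e^{−K n ε_n²} ) → 1 whenever nε_n² → ∞. -/

import Mathlib

open MeasureTheory ProbabilityTheory Filter Finset
open scoped NNReal ENNReal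

/-- Hellinger distance squared `H(f,g)² = ∫ (√f − √g)² dμ`. -/
noncomputable def Hsq {𝕐 : Type*} [MeasurableSpace 𝕐] (μ : Measure 𝕐)
    (f g : 𝕐 → ℝ) : ℝ :=
  ∫ y, (Real.sqrt (f y) - Real.sqrt (g y)) ^ 2 ∂μ

/-- Likelihood ratio `R_n(θ) = ∏_{i=1}^n f_θ(Y_i)/f*(Y_i)` (here indices `0,…,n-1`). -/
noncomputable def Rlik {Θ 𝕐 Ω : Type*} (f : Θ → 𝕐 → ℝ) (fstar : 𝕐 → ℝ)
    (Y : ℕ → Ω → 𝕐) (n : ℕ) (θ : Θ) (ω : Ω) : ℝ :=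
  ∏ i ∈ Finset.range n, f θ (Y i ω) / fstar (Y i ω)

lemma sqrt_finset_prod {ι : Type*} (s : Finset ι) (g : ι → ℝ) (hg : ∀ i ∈ s, 0 ≤ g i) :
    Real.sqrt (∏ i ∈ s, g i) = ∏ i ∈ s, Real.sqrt (g i) := by
  classical
  induction s using Finset.induction_on with
  | empty => simp
  | insert _ _ hns ih =>
    rename_i a s
    rw [Finset.prod_insert hns, Finset.prod_insert hns,
      Real.sqrt_mul (hg a (Finset.mem_insert_self a s)),
      ih (fun i hi => hg i (Finset.mem_insert_of_mem hi))]

lemma amgm_sqrt {a b : ℝ} (ha : 0 ≤ a) (hb : 0 ≤ b) : Real.sqrt (a * b) ≤ (a + b) / 2 := by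
  rw [show (a + b) / 2 = Real.sqrt (((a + b) / 2) ^ 2) from (Real.sqrt_sq (by positivity)).symm]
  exact Real.sqrt_le_sqrt (by nlinarith [sq_nonneg (a - b)])

/-- **Pseudo-posterior numerator bound.** With `A_n = {f : H(f*,f) > Mε_n}`, the
numerator of the pseudo-posterior probability of `A_n` satisfies
`E[∫_{A_n} R_n(f)^{1/2} Π(df)] ≤ Π(A_n) e^{-nM²ε_n²/2} ≤ e^{-nM²ε_n²/2}`;
consequently for any `K < M²/2` it is `≤ e^{-Knε_n²}` in probability whenever
`nε_n² → ∞`. -/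
theorem stmt_11
    {𝕐 : Type*} [MeasurableSpace 𝕐] (μ : Measure 𝕐) [SigmaFinite μ]
    {Θ : Type*} [MeasurableSpace Θ] (Pri : Measure Θ) [IsProbabilityMeasure Pri]
    (f : Θ → 𝕐 → ℝ) (hf_meas : Measurable (Function.uncurry f))
    (hf_nonneg : ∀ θ y, 0 ≤ f θ y) (hf_int : ∀ θ, ∫ y, f θ y ∂μ = 1)
    (fstar : 𝕐 → ℝ) (hfstar_meas : Measurable fstar)
    (hfstar_nonneg : ∀ y, 0 ≤ fstar y) (hfstar_int : ∫ y, fstar y ∂μ = 1)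
    {Ω : Type*} [MeasurableSpace Ω] (P : Measure Ω) [IsProbabilityMeasure P]
    (Y : ℕ → Ω → 𝕐) (hY_meas : ∀ i, Measurable (Y i))
    (hY_indep : iIndepFun Y P)
    (hY_law : ∀ i, P.map (Y i) = μ.withDensity (fun y => ENNReal.ofReal (fstar y)))
    (ε : ℕ → ℝ) (hε_pos : ∀ n, 0 < ε n) (M : ℝ) (hM : 0 < M)
    -- the sets `A_n = {f ∈ 𝔽 : H(f*, f) > Mε_n}`
    (A : ℕ → Set Θ)
    (hA : ∀ n, A n = {θ | M * ε n < Real.sqrt (Hsq μ fstar (f θ))}) :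
    (∀ n : ℕ,
      (∫ ω, (∫ θ in A n, Real.sqrt (Rlik f fstar Y n θ ω) ∂Pri) ∂P ≤
        (Pri (A n)).toReal * Real.exp (-(n * M ^ 2 * ε n ^ 2 / 2))) ∧
      (Pri (A n)).toReal * Real.exp (-(n * M ^ 2 * ε n ^ 2 / 2)) ≤
        Real.exp (-(n * M ^ 2 * ε n ^ 2 / 2))) ∧
    (∀ K : ℝ, K < M ^ 2 / 2 →
      Tendsto (fun n : ℕ => n * ε n ^ 2) atTop atTop →
      Tendsto
        (fun n : ℕ =>
          P {ω | (∫ θ in A n, Real.sqrt (Rlik f fstar Y n θ ω) ∂Pri) ≤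
            Real.exp (-(K * n * ε n ^ 2))})
        atTop (nhds 1)) := by
  classical
  -- basic measurability
  have hfθ_meas : ∀ θ, Measurable (f θ) := fun θ =>
    hf_meas.comp measurable_prodMk_left
  have hfθ_int : ∀ θ, Integrable (f θ) μ := by
    intro θ
    by_contra h
    have h1 := hf_int θ
    rw [integral_undef h] at h1
    exact one_ne_zero h1.symm
  have hfstar_intg : Integrable fstar μ := by
    by_contra h
    rw [integral_undef h] at hfstar_int
    exact one_ne_zero hfstar_int.symm
  set g : Θ → ℝ := fun θ => ∫ y, Real.sqrt (f θ y * fstar y) ∂μ with hg_def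
  have hsqrt_meas : ∀ θ, Measurable (fun y => Real.sqrt (f θ y * fstar y)) := fun θ =>
    ((hfθ_meas θ).mul hfstar_meas).sqrt
  have hsqrt_int : ∀ θ, Integrable (fun y => Real.sqrt (f θ y * fstar y)) μ := by
    intro θ
    refine Integrable.mono (((hfθ_int θ).add hfstar_intg).div_const 2)
      (hsqrt_meas θ).aestronglyMeasurable (Filter.Eventually.of_forall fun y => ?_)
    simp only [Real.norm_eq_abs, Pi.add_apply]
    rw [abs_of_nonneg (Real.sqrt_nonneg _),
      abs_of_nonneg (by have := hf_nonneg θ y; have := hfstar_nonneg y; linarith : (0:ℝ) ≤ (f θ y + fstar y) / 2)]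
    exact amgm_sqrt (hf_nonneg θ y) (hfstar_nonneg y)
  have hg_nonneg : ∀ θ, 0 ≤ g θ := fun θ =>
    integral_nonneg fun y => Real.sqrt_nonneg _
  -- Hellinger identity
  have hHsq : ∀ θ, g θ = 1 - Hsq μ fstar (f θ) / 2 := by
    intro θ
    have hpt : ∀ y, (Real.sqrt (fstar y) - Real.sqrt (f θ y)) ^ 2
        = (fstar y + f θ y) - 2 * Real.sqrt (f θ y * fstar y) := by
      intro y
      have h1 : Real.sqrt (fstar y) ^ 2 = fstar y := Real.sq_sqrt (hfstar_nonneg y)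
      have h2 : Real.sqrt (f θ y) ^ 2 = f θ y := Real.sq_sqrt (hf_nonneg θ y)
      have h3 : Real.sqrt (f θ y * fstar y) = Real.sqrt (f θ y) * Real.sqrt (fstar y) :=
        Real.sqrt_mul (hf_nonneg θ y) _
      rw [h3]; nlinarith [h1, h2]
    have : Hsq μ fstar (f θ)
        = ∫ y, ((fstar y + f θ y) - 2 * Real.sqrt (f θ y * fstar y)) ∂μ := by
      unfold Hsq
      exact integral_congr_ae (Filter.Eventually.of_forall hpt)
    have h5 : ∫ y, ((fstar y + f θ y) - 2 * Real.sqrt (f θ y * fstar y)) ∂μ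
        = (∫ y, (fstar y + f θ y) ∂μ) - ∫ y, 2 * Real.sqrt (f θ y * fstar y) ∂μ :=
      integral_sub (hfstar_intg.add (hfθ_int θ)) ((hsqrt_int θ).const_mul 2)
    have h6 : ∫ y, (fstar y + f θ y) ∂μ = 1 + 1 := by
      rw [integral_add hfstar_intg (hfθ_int θ), hfstar_int, hf_int θ]
    have h7 : ∫ y, 2 * Real.sqrt (f θ y * fstar y) ∂μ = 2 * g θ :=
      integral_const_mul 2 _
    have h4 : Hsq μ fstar (f θ) = 1 + 1 - 2 * g θ := by
      rw [this, h5, h6, h7]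
    rw [h4]; ring
  -- pointwise key identity: f* y * √(fθ y / f* y) = √(fθ y * f* y)
  have hkey : ∀ θ y, fstar y * Real.sqrt (f θ y / fstar y) = Real.sqrt (f θ y * fstar y) := by
    intro θ y
    have hring : fstar y * (Real.sqrt (f θ y) / Real.sqrt (fstar y))
        = Real.sqrt (f θ y) * (fstar y / Real.sqrt (fstar y)) := by ring
    rw [Real.sqrt_div (hf_nonneg θ y), Real.sqrt_mul (hf_nonneg θ y), hring, Real.div_sqrt]
  have hφ_meas : ∀ θ, Measurable (fun y => Real.sqrt (f θ y / fstar y)) := fun θ =>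
    ((hfθ_meas θ).div hfstar_meas).sqrt
  have hdens : (fun y => ENNReal.ofReal (fstar y))
      = fun y => ((Real.toNNReal (fstar y) : ℝ≥0) : ℝ≥0∞) := rfl
  have htoNN_meas : Measurable fun y => Real.toNNReal (fstar y) := hfstar_meas.real_toNNReal
  -- per-observation expectation
  have hEX : ∀ θ (i : ℕ),
      ∫ ω, Real.sqrt (f θ (Y i ω) / fstar (Y i ω)) ∂P = g θ := by
    intro θ i
    have h1 : ∫ y, Real.sqrt (f θ y / fstar y) ∂(P.map (Y i)) = g θ := by
      rw [hY_law i, hdens, integral_withDensity_eq_integral_smul htoNN_meas]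
      refine integral_congr_ae (Filter.Eventually.of_forall fun y => ?_)
      simp only [NNReal.smul_def, smul_eq_mul, Real.coe_toNNReal _ (hfstar_nonneg y)]
      exact hkey θ y
    rw [← h1, integral_map (hY_meas i).aemeasurable (hφ_meas θ).aestronglyMeasurable]
  -- integrability of each factor over Ω
  have hX_int : ∀ θ (i : ℕ),
      Integrable (fun ω => Real.sqrt (f θ (Y i ω) / fstar (Y i ω))) P := by
    intro θ i
    have h1 : Integrable (fun y => Real.sqrt (f θ y / fstar y)) (P.map (Y i)) := by
      rw [hY_law i, hdens, integrable_withDensity_iff_integrable_smul htoNN_meas]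
      refine (hsqrt_int θ).congr (Filter.Eventually.of_forall fun y => ?_)
      simp only [NNReal.smul_def, smul_eq_mul, Real.coe_toNNReal _ (hfstar_nonneg y)]
      exact (hkey θ y).symm
    exact (integrable_map_measure (hφ_meas θ).aestronglyMeasurable
      (hY_meas i).aemeasurable).mp h1
  -- product formula : E[√R_n(θ)] = (g θ)^n
  have hR_eq : ∀ (θ : Θ) (m : ℕ) (ω : Ω), Real.sqrt (Rlik f fstar Y m θ ω)
      = ∏ i ∈ Finset.range m, Real.sqrt (f θ (Y i ω) / fstar (Y i ω)) := by
    intro θ m ω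
    unfold Rlik
    exact sqrt_finset_prod _ _ fun i _ =>
      div_nonneg (hf_nonneg θ _) (hfstar_nonneg _)
  have hprod : ∀ (θ : Θ) (m : ℕ),
      ∫ ω, Real.sqrt (Rlik f fstar Y m θ ω) ∂P = (g θ) ^ m := by
    intro θ m
    have hX_indep : iIndepFun
        (fun i ω => Real.sqrt (f θ (Y i ω) / fstar (Y i ω))) P :=
      hY_indep.comp (fun _ y => Real.sqrt (f θ y / fstar y)) fun _ => hφ_meas θ
    have hXm : ∀ i : ℕ, Measurable fun ω => Real.sqrt (f θ (Y i ω) / fstar (Y i ω)) :=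
      fun i => (hφ_meas θ).comp (hY_meas i)
    simp only [hR_eq θ m]
    induction m with
    | zero => simp
    | succ n ih =>
      have hindep := hX_indep.indepFun_prod_range_succ hXm n
      have heq : (fun ω => ∏ i ∈ Finset.range (n + 1),
          Real.sqrt (f θ (Y i ω) / fstar (Y i ω)))
          = (∏ i ∈ Finset.range n, fun ω => Real.sqrt (f θ (Y i ω) / fstar (Y i ω)))
            * (fun ω => Real.sqrt (f θ (Y n ω) / fstar (Y n ω))) := by
        funext ω
        simp [Finset.prod_apply, Finset.prod_range_succ]
      have hPm : Measurable (∏ j ∈ Finset.range n,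
          fun ω => Real.sqrt (f θ (Y j ω) / fstar (Y j ω))) := by
        have := Finset.measurable_prod (Finset.range n) fun i (_ : i ∈ Finset.range n) => hXm i
        convert this using 1
        funext ω
        simp [Finset.prod_apply]
      rw [heq, hindep.integral_mul_eq_mul_integral hPm.aestronglyMeasurable (hXm n).aestronglyMeasurable]
      have : ∫ ω, (∏ i ∈ Finset.range n,
          fun ω' => Real.sqrt (f θ (Y i ω') / fstar (Y i ω'))) ω ∂P = g θ ^ n := by
        rw [← ih]
        refine integral_congr_ae (Filter.Eventually.of_forall fun ω => ?_)
        simp [Finset.prod_apply]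
      calc (∫ ω, (∏ i ∈ Finset.range n,
            fun ω' => Real.sqrt (f θ (Y i ω') / fstar (Y i ω'))) ω ∂P)
            * ∫ ω, Real.sqrt (f θ (Y n ω) / fstar (Y n ω)) ∂P
          = g θ ^ n * g θ := by rw [this, hEX θ n]
        _ = g θ ^ (n + 1) := by ring
  -- integrability of √R_n(θ) over Ω
  have hRint : ∀ (θ : Θ) (m : ℕ),
      Integrable (fun ω => Real.sqrt (Rlik f fstar Y m θ ω)) P := by
    intro θ m
    have hX_indep : iIndepFun
        (fun i ω => Real.sqrt (f θ (Y i ω) / fstar (Y i ω))) P :=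
      hY_indep.comp (fun _ y => Real.sqrt (f θ y / fstar y)) fun _ => hφ_meas θ
    have hXm : ∀ i : ℕ, Measurable fun ω => Real.sqrt (f θ (Y i ω) / fstar (Y i ω)) :=
      fun i => (hφ_meas θ).comp (hY_meas i)
    simp only [hR_eq θ m]
    induction m with
    | zero => simp only [Finset.range_zero, Finset.prod_empty]; exact integrable_const (1 : ℝ)
    | succ n ih =>
      have hindep := hX_indep.indepFun_prod_range_succ hXm n
      have hPm : Measurable (∏ j ∈ Finset.range n,
          fun ω => Real.sqrt (f θ (Y j ω) / fstar (Y j ω))) := by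
        have := Finset.measurable_prod (Finset.range n) fun i (_ : i ∈ Finset.range n) => hXm i
        convert this using 1
        funext ω
        simp [Finset.prod_apply]
      have heq : (fun ω => ∏ i ∈ Finset.range (n + 1),
          Real.sqrt (f θ (Y i ω) / fstar (Y i ω)))
          = (∏ i ∈ Finset.range n, fun ω => Real.sqrt (f θ (Y i ω) / fstar (Y i ω)))
            * (fun ω => Real.sqrt (f θ (Y n ω) / fstar (Y n ω))) := by
        funext ω
        simp [Finset.prod_apply, Finset.prod_range_succ]
      rw [heq]
      refine hindep.integrable_mul ?_ (hX_int θ n)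
      refine ih.congr (Filter.Eventually.of_forall fun ω => ?_)
      simp [Finset.prod_apply]
  -- measurability of A n
  have hHsq_meas : Measurable fun θ => Hsq μ fstar (f θ) := by
    have hsm : StronglyMeasurable
        (fun p : Θ × 𝕐 => (Real.sqrt (fstar p.2) - Real.sqrt (f p.1 p.2)) ^ 2) :=
      (((hfstar_meas.comp measurable_snd).sqrt.sub
        ((hf_meas : Measurable fun p : Θ × 𝕐 => f p.1 p.2).sqrt)).pow_const 2).stronglyMeasurable
    exact hsm.integral_prod_right'.measurable
  have hA_meas : ∀ n, MeasurableSet (A n) := by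
    intro n
    rw [hA n]
    exact measurableSet_lt measurable_const hHsq_meas.sqrt
  -- bound on A n
  have hHsq_nonneg : ∀ θ, 0 ≤ Hsq μ fstar (f θ) := fun θ =>
    integral_nonneg fun y => sq_nonneg _
  have hgA : ∀ (n : ℕ) (θ : Θ), θ ∈ A n → g θ ≤ Real.exp (-(M ^ 2 * ε n ^ 2 / 2)) := by
    intro n θ hθ
    rw [hA n] at hθ
    have h1 : (M * ε n) ^ 2 < Hsq μ fstar (f θ) :=
      (Real.lt_sqrt (mul_nonneg hM.le (hε_pos n).le)).mp hθ
    have h2 : g θ < 1 - (M * ε n) ^ 2 / 2 := by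
      rw [hHsq θ]; linarith
    have h3 : 1 - (M * ε n) ^ 2 / 2 ≤ Real.exp (-((M * ε n) ^ 2 / 2)) := by
      have := Real.add_one_le_exp (-((M * ε n) ^ 2 / 2))
      linarith
    have h4 : (M * ε n) ^ 2 = M ^ 2 * ε n ^ 2 := by ring
    rw [h4] at h2 h3
    linarith
  -- joint measurability
  have hjoint : ∀ n : ℕ, Measurable fun p : Ω × Θ => Real.sqrt (Rlik f fstar Y n p.2 p.1) := by
    intro n
    apply Measurable.sqrt
    unfold Rlik
    apply Finset.measurable_prod
    intro i _
    exact (hf_meas.comp (measurable_snd.prodMk ((hY_meas i).comp measurable_fst))).div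
      (hfstar_meas.comp ((hY_meas i).comp measurable_fst))
  set N : ℕ → Ω → ℝ := fun n ω => ∫ θ in A n, Real.sqrt (Rlik f fstar Y n θ ω) ∂Pri with hN_def
  have hN_meas : ∀ n, StronglyMeasurable (N n) := fun n =>
    (hjoint n).stronglyMeasurable.integral_prod_right'
  have hN_nonneg : ∀ n ω, 0 ≤ N n ω := fun n ω =>
    integral_nonneg fun θ => Real.sqrt_nonneg _
  -- the main expectation bound
  have hlin : ∀ n : ℕ, ∫⁻ ω, ENNReal.ofReal (N n ω) ∂P ≤
      ENNReal.ofReal (Real.exp (-(n * M ^ 2 * ε n ^ 2 / 2))) * Pri (A n) := by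
    intro n
    set c : ℝ := Real.exp (-(n * M ^ 2 * ε n ^ 2 / 2)) with hc_def
    have hc_pos : 0 < c := Real.exp_pos _
    have step1 : ∀ ω, ENNReal.ofReal (N n ω) ≤
        ∫⁻ θ, ENNReal.ofReal (Real.sqrt (Rlik f fstar Y n θ ω)) ∂(Pri.restrict (A n)) := by
      intro ω
      by_cases hint : Integrable (fun θ => Real.sqrt (Rlik f fstar Y n θ ω)) (Pri.restrict (A n))
      · rw [hN_def]
        rw [ofReal_integral_eq_lintegral_ofReal hint
          (Filter.Eventually.of_forall fun θ => Real.sqrt_nonneg _)]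
      · rw [hN_def]
        simp only [integral_undef hint, ENNReal.ofReal_zero]
        exact zero_le
    have step2 : ∫⁻ ω, ENNReal.ofReal (N n ω) ∂P ≤
        ∫⁻ θ, ∫⁻ ω, ENNReal.ofReal (Real.sqrt (Rlik f fstar Y n θ ω)) ∂P
          ∂(Pri.restrict (A n)) := by
      refine le_trans (lintegral_mono step1) (le_of_eq ?_)
      rw [← lintegral_lintegral_swap]
      exact (((hjoint n).comp measurable_swap).ennreal_ofReal).aemeasurable
    have step3 : ∀ θ, θ ∈ A n →
        ∫⁻ ω, ENNReal.ofReal (Real.sqrt (Rlik f fstar Y n θ ω)) ∂P ≤ ENNReal.ofReal c := by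
      intro θ hθ
      have hi : Integrable (fun ω => Real.sqrt (Rlik f fstar Y n θ ω)) P := hRint θ n
      rw [← ofReal_integral_eq_lintegral_ofReal hi
        (Filter.Eventually.of_forall fun ω => Real.sqrt_nonneg _), hprod θ n]
      refine ENNReal.ofReal_le_ofReal ?_
      calc g θ ^ n ≤ (Real.exp (-(M ^ 2 * ε n ^ 2 / 2))) ^ n :=
            pow_le_pow_left₀ (hg_nonneg θ) (hgA n θ hθ) n
        _ = c := by
            rw [← Real.exp_nat_mul, hc_def]
            ring_nf
    have step4 : ∫⁻ θ, ∫⁻ ω, ENNReal.ofReal (Real.sqrt (Rlik f fstar Y n θ ω)) ∂P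
        ∂(Pri.restrict (A n)) ≤ ENNReal.ofReal c * Pri (A n) := by
      calc ∫⁻ θ, ∫⁻ ω, ENNReal.ofReal (Real.sqrt (Rlik f fstar Y n θ ω)) ∂P
            ∂(Pri.restrict (A n))
          ≤ ∫⁻ _, ENNReal.ofReal c ∂(Pri.restrict (A n)) := by
            refine lintegral_mono_ae ?_
            refine (ae_restrict_iff' (hA_meas n)).mpr ?_
            exact Filter.Eventually.of_forall step3
        _ = ENNReal.ofReal c * Pri.restrict (A n) Set.univ := by
            rw [lintegral_const]
        _ = ENNReal.ofReal c * Pri (A n) := by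
            rw [Measure.restrict_apply_univ]
    exact le_trans step2 step4
  have hmain : ∀ n : ℕ, ∫ ω, N n ω ∂P ≤
      (Pri (A n)).toReal * Real.exp (-(n * M ^ 2 * ε n ^ 2 / 2)) := by
    intro n
    set c : ℝ := Real.exp (-(n * M ^ 2 * ε n ^ 2 / 2)) with hc_def
    have hc_pos : 0 < c := Real.exp_pos _
    rw [integral_eq_lintegral_of_nonneg_ae (Filter.Eventually.of_forall (hN_nonneg n))
      (hN_meas n).aestronglyMeasurable]
    have hfin : ENNReal.ofReal c * Pri (A n) ≠ ⊤ :=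
      ENNReal.mul_ne_top ENNReal.ofReal_ne_top (measure_ne_top _ _)
    calc (∫⁻ ω, ENNReal.ofReal (N n ω) ∂P).toReal
        ≤ (ENNReal.ofReal c * Pri (A n)).toReal :=
          ENNReal.toReal_mono hfin (hlin n)
      _ = (Pri (A n)).toReal * c := by
          rw [ENNReal.toReal_mul, ENNReal.toReal_ofReal hc_pos.le]; ring
  refine ⟨fun n => ⟨hmain n, ?_⟩, ?_⟩
  · have h1 : (Pri (A n)).toReal ≤ 1 := by
      have := prob_le_one (μ := Pri) (s := A n)
      exact ENNReal.toReal_le_of_le_ofReal one_pos.le (by simpa using this)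
    nlinarith [Real.exp_pos (-(↑n * M ^ 2 * ε n ^ 2 / 2)), h1,
      ENNReal.toReal_nonneg (a := Pri (A n))]
  · intro K hK hslow
    set D : ℕ → ℝ := fun n => Real.exp (-(K * n * ε n ^ 2)) with hD_def
    have hEvents : ∀ n, MeasurableSet {ω | N n ω ≤ D n} := fun n =>
      measurableSet_le (hN_meas n).measurable measurable_const
    set b : ℕ → ℝ≥0∞ := fun n =>
      ENNReal.ofReal (Real.exp (-((M ^ 2 / 2 - K) * (n * ε n ^ 2)))) with hb_def
    have hb_bound : ∀ n, P {ω | D n < N n ω} ≤ b n := by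
      intro n
      set c : ℝ := Real.exp (-(n * M ^ 2 * ε n ^ 2 / 2)) with hc_def
      have hc_pos : 0 < c := Real.exp_pos _
      have hD_pos : 0 < D n := Real.exp_pos _
      have hsub : {ω | D n < N n ω} ⊆
          {ω | ENNReal.ofReal (D n) ≤ ENNReal.ofReal (N n ω)} := fun ω hω =>
        ENNReal.ofReal_le_ofReal (le_of_lt hω)
      have hmark := mul_meas_ge_le_lintegral₀ (μ := P)
        ((hN_meas n).measurable.ennreal_ofReal.aemeasurable) (ENNReal.ofReal (D n))
      have hchain : ENNReal.ofReal (D n) * P {ω | D n < N n ω} ≤ ENNReal.ofReal c :=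
        calc ENNReal.ofReal (D n) * P {ω | D n < N n ω}
            ≤ ENNReal.ofReal (D n) *
              P {ω | ENNReal.ofReal (D n) ≤ ENNReal.ofReal (N n ω)} :=
              mul_le_mul_right (measure_mono hsub) _
          _ ≤ ∫⁻ ω, ENNReal.ofReal (N n ω) ∂P := hmark
          _ ≤ ENNReal.ofReal c * Pri (A n) := hlin n
          _ ≤ ENNReal.ofReal c * 1 := mul_le_mul_right prob_le_one _
          _ = ENNReal.ofReal c := mul_one _
      have hdiv : P {ω | D n < N n ω} ≤ ENNReal.ofReal c / ENNReal.ofReal (D n) := by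
        rw [ENNReal.le_div_iff_mul_le
          (Or.inl (by simp [ENNReal.ofReal_eq_zero, not_le, hD_pos]))
          (Or.inl ENNReal.ofReal_ne_top)]
        rw [mul_comm]
        exact hchain
      refine le_trans hdiv (le_of_eq ?_)
      rw [← ENNReal.ofReal_div_of_pos hD_pos, hb_def]
      congr 1
      rw [hc_def, hD_def, ← Real.exp_sub]
      congr 1
      ring
    have hb_tendsto : Tendsto b atTop (nhds 0) := by
      have h1 : Tendsto (fun n : ℕ => (M ^ 2 / 2 - K) * (n * ε n ^ 2)) atTop atTop :=
        Tendsto.const_mul_atTop (by linarith) hslow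
      have h2 : Tendsto (fun n : ℕ => -((M ^ 2 / 2 - K) * (n * ε n ^ 2))) atTop atBot :=
        tendsto_neg_atTop_atBot.comp h1
      have h3 : Tendsto (fun n : ℕ => Real.exp (-((M ^ 2 / 2 - K) * (n * ε n ^ 2))))
          atTop (nhds 0) := Real.tendsto_exp_atBot.comp h2
      have h4 := (ENNReal.continuous_ofReal.tendsto 0).comp h3
      simpa [hb_def, Function.comp_def] using h4
    have hP_tendsto : Tendsto (fun n => P {ω | D n < N n ω}) atTop (nhds 0) :=
      tendsto_of_tendsto_of_tendsto_of_le_of_le tendsto_const_nhds hb_tendsto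
        (fun n => zero_le) hb_bound
    have hEq : ∀ n, P {ω | N n ω ≤ D n} = 1 - P {ω | D n < N n ω} := by
      intro n
      have hcompl : {ω | D n < N n ω} = {ω | N n ω ≤ D n}ᶜ := by
        ext ω; simp [not_le]
      rw [hcompl, prob_compl_eq_one_sub (hEvents n),
        ENNReal.sub_sub_cancel ENNReal.one_ne_top prob_le_one]
    have hfinal : Tendsto (fun n => 1 - P {ω | D n < N n ω}) atTop (nhds 1) := by
      have := ENNReal.Tendsto.sub (tendsto_const_nhds (x := (1 : ℝ≥0∞))) hP_tendsto
        (Or.inl ENNReal.one_ne_top)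
      simpa using this
    refine hfinal.congr fun n => ?_
    exact (hEq n).symm
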